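/- Suppose tolls τ have been mapped to a labeling (L, Δ) with L = min over s-t paths P of α(P) and Δ_H = (min over paths in H_L of α) − (min over paths in H_R of α) for each parallel-join subgraph H, where α are canonical tolls equal to τ on all path sums. Then the reconstruction procedure—initializing β = 0, traversing parallel-join subgraphs bottom-up and adding max(0, Δ_H) to edges of H_L leaving s_H and max(0, −Δ_H) to edges of H_R leaving s_H, and finally adding L to all edges leaving s—recovers exactly β = α. -/

import Mathlib

/-- Two-terminal series-parallel graphs, given by their binary decomposition tree. -/
inductive SPG : Type
  | edge : SPG
  | series : SPG → SPG → SPG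
  | parallel : SPG → SPG → SPG

namespace SPG

/-- The edge set of a series-parallel graph (the leaves of the decomposition tree). -/
def E : SPG → Type
  | .edge => Unit
  | .series a b => a.E ⊕ b.E
  | .parallel a b => a.E ⊕ b.E

/-- The `s`-`t` paths of a series-parallel graph. -/
def Path : SPG → Type
  | .edge => Unit
  | .series a b => a.Path × b.Path
  | .parallel a b => a.Path ⊕ b.Path

/-- The cost `c(P) = Σ_{e ∈ P} c_e` of a path under edge costs `c`. -/
def pathCost : (G : SPG) → (G.E → ℝ) → G.Path → ℝ
  | .edge, c, _ => c ()
  | .series a b, c, P => a.pathCost (c ∘ Sum.inl) P.1 + b.pathCost (c ∘ Sum.inr) P.2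
  | .parallel a _, c, .inl P => a.pathCost (c ∘ Sum.inl) P
  | .parallel _ b, c, .inr P => b.pathCost (c ∘ Sum.inr) P

/-- The minimum of `c(P)` over all `s`-`t` paths `P` of `G`. -/
def minPathCost : (G : SPG) → (G.E → ℝ) → ℝ
  | .edge, c => c ()
  | .series a b, c => a.minPathCost (c ∘ Sum.inl) + b.minPathCost (c ∘ Sum.inr)
  | .parallel a b, c => min (a.minPathCost (c ∘ Sum.inl)) (b.minPathCost (c ∘ Sum.inr))

/-- `e` is an edge leaving the source terminal of `G`. -/
def isSourceEdge : (G : SPG) → G.E → Prop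
  | .edge, _ => True
  | .series a _, e => match e with
      | .inl e => a.isSourceEdge e
      | .inr _ => False
  | .parallel a b, e => match e with
      | .inl e => a.isSourceEdge e
      | .inr e => b.isSourceEdge e

/-- Canonical tolls: for every subgraph `H` of the decomposition tree and every edge
`e` leaving the source terminal `s_H` of `H`, `α_e ≥ min_{P ∈ 𝒫(H)} α(P)`. -/
def Canonical : (G : SPG) → (G.E → ℝ) → Prop
  | .edge, _ => True
  | .series a b, τ =>
      (∀ e, a.isSourceEdge e →
        a.minPathCost (τ ∘ Sum.inl) + b.minPathCost (τ ∘ Sum.inr) ≤ τ (Sum.inl e)) ∧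
      a.Canonical (τ ∘ Sum.inl) ∧ b.Canonical (τ ∘ Sum.inr)
  | .parallel a b, τ =>
      (∀ e, a.isSourceEdge e →
        min (a.minPathCost (τ ∘ Sum.inl)) (b.minPathCost (τ ∘ Sum.inr)) ≤ τ (Sum.inl e)) ∧
      (∀ e, b.isSourceEdge e →
        min (a.minPathCost (τ ∘ Sum.inl)) (b.minPathCost (τ ∘ Sum.inr)) ≤ τ (Sum.inr e)) ∧
      a.Canonical (τ ∘ Sum.inl) ∧ b.Canonical (τ ∘ Sum.inr)

end SPG

namespace SPG

/-- Add the constant `c` to the toll of every edge leaving the source terminal of `G`. -/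
def addToSource : (G : SPG) → ℝ → (G.E → ℝ) → (G.E → ℝ)
  | .edge, c, β => fun _ => β () + c
  | .series a _, c, β => Sum.elim (a.addToSource c (β ∘ Sum.inl)) (β ∘ Sum.inr)
  | .parallel a b, c, β =>
      Sum.elim (a.addToSource c (β ∘ Sum.inl)) (b.addToSource c (β ∘ Sum.inr))

/-- The reconstruction procedure (steps M1–M2) applied to the labeling `Δ` obtained
from canonical tolls `α`: starting from the zero tolls, traverse the parallel-join
subgraphs bottom-up; at a parallel join `H` of left part `H_L` and right part `H_R`,
with label `Δ_H = min_{P ∈ 𝒫(H_L)} α(P) − min_{P ∈ 𝒫(H_R)} α(P)`, add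
`max(0, Δ_H)` to the edges of `H_L` leaving `s_H` and `max(0, −Δ_H)` to the edges of
`H_R` leaving `s_H`. -/
def recon0 : (G : SPG) → (G.E → ℝ) → (G.E → ℝ)
  | .edge, _ => fun _ => 0
  | .series a b, α => Sum.elim (a.recon0 (α ∘ Sum.inl)) (b.recon0 (α ∘ Sum.inr))
  | .parallel a b, α =>
      Sum.elim
        (a.addToSource (max 0 (a.minPathCost (α ∘ Sum.inl) - b.minPathCost (α ∘ Sum.inr)))
          (a.recon0 (α ∘ Sum.inl)))
        (b.addToSource (max 0 (-(a.minPathCost (α ∘ Sum.inl) - b.minPathCost (α ∘ Sum.inr))))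
          (b.recon0 (α ∘ Sum.inr)))

end SPG

/-!
By induction on the decomposition tree, the reconstruction `β` of a subgraph `H` differs
from `α` exactly by `min_{P ∈ 𝒫(H)} α(P)` on the edges leaving `s_H`. In a series join
`H₁ · H₂`, canonicity at `s_H` together with `α ≥ 0` forces `min_{𝒫(H₂)} α = 0`, so `H₂`
is already reconstructed and the offset of `H` is that of `H₁`. In a parallel join the
label `max(0, ±Δ_H)` added at `s_H`, plus the common offset `min(m_L, m_R)`, is exactly
the offset `m_L` resp. `m_R` of the part, where `m_L`, `m_R` are the minimum path tolls of
`H_L`, `H_R`.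
-/

theorem max_zero_sub_add_min (a b : ℝ) : max 0 (a - b) + min a b = a := by
  rcases le_total a b with h | h
  · rw [max_eq_left (sub_nonpos.mpr h), min_eq_left h, zero_add]
  · rw [max_eq_right (sub_nonneg.mpr h), min_eq_right h, sub_add_cancel]

namespace SPG

theorem minPathCost_nonneg : ∀ (G : SPG) {α : G.E → ℝ}, (∀ e, 0 ≤ α e) →
    0 ≤ G.minPathCost α
  | .edge, _, hα => hα ()
  | .series a b, _, hα =>
      add_nonneg (a.minPathCost_nonneg fun _ => hα _) (b.minPathCost_nonneg fun _ => hα _)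
  | .parallel a b, _, hα =>
      le_min (a.minPathCost_nonneg fun _ => hα _) (b.minPathCost_nonneg fun _ => hα _)

theorem le_minPathCost_of_le_source : ∀ (G : SPG) {α : G.E → ℝ} {c : ℝ},
    (∀ e, 0 ≤ α e) → (∀ e, G.isSourceEdge e → c ≤ α e) → c ≤ G.minPathCost α
  | .edge, _, _, _, hs => hs () trivial
  | .series a b, _, _, hα, hs =>
      le_add_of_le_of_nonneg (a.le_minPathCost_of_le_source (fun _ => hα _) fun e => hs (.inl e))
        (b.minPathCost_nonneg fun _ => hα _)
  | .parallel a b, _, _, hα, hs =>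
      le_min (a.le_minPathCost_of_le_source (fun _ => hα _) fun e => hs (.inl e))
        (b.le_minPathCost_of_le_source (fun _ => hα _) fun e => hs (.inr e))

theorem Canonical.minPathCost_right_eq_zero {a b : SPG} {α : (series a b).E → ℝ}
    (hcan : (series a b).Canonical α) (hα : ∀ e, 0 ≤ α e) :
    b.minPathCost (α ∘ Sum.inr) = 0 := by
  have hle : a.minPathCost (α ∘ Sum.inl) + b.minPathCost (α ∘ Sum.inr) ≤
      a.minPathCost (α ∘ Sum.inl) :=
    a.le_minPathCost_of_le_source (fun _ => hα _) hcan.1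
  exact le_antisymm (by linarith) (b.minPathCost_nonneg fun _ => hα _)

theorem addToSource_addToSource : ∀ (G : SPG) (c d : ℝ) (β : G.E → ℝ),
    G.addToSource c (G.addToSource d β) = G.addToSource (d + c) β
  | .edge, c, d, β => funext fun _ => add_assoc (β ()) d c
  | .series a _, c, d, _ => funext fun
      | .inl e => congrFun (a.addToSource_addToSource c d _) e
      | .inr _ => rfl
  | .parallel a b, c, d, _ => funext fun
      | .inl e => congrFun (a.addToSource_addToSource c d _) e
      | .inr e => congrFun (b.addToSource_addToSource c d _) e

theorem addToSource_zero : ∀ (G : SPG) (β : G.E → ℝ), G.addToSource 0 β = β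
  | .edge, β => funext fun _ => add_zero (β ())
  | .series a _, _ => funext fun
      | .inl e => congrFun (a.addToSource_zero _) e
      | .inr _ => rfl
  | .parallel a b, _ => funext fun
      | .inl e => congrFun (a.addToSource_zero _) e
      | .inr e => congrFun (b.addToSource_zero _) e

end SPG

/-- Lemma 4.4: mapping nonnegative canonical tolls `α` to the labeling
`(L, Δ)` with `L = min_{P ∈ 𝒫} α(P)` and `Δ_H = min_{𝒫(H_L)} α − min_{𝒫(H_R)} α`
and then running the reconstruction procedure (steps M1–M3: bottom-up additions of
`max(0, Δ_H)` / `max(0, −Δ_H)` at parallel joins, followed by adding `L` to the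
edges leaving the global source) recovers exactly `α`. -/
theorem spg_labeling_reconstruction (G : SPG) (α : G.E → ℝ)
    (hα : ∀ e, 0 ≤ α e) (hcan : G.Canonical α) :
    G.addToSource (G.minPathCost α) (G.recon0 α) = α := by
  induction G with
  | edge => funext _; exact zero_add (α ())
  | series a b iha ihb =>
      have hb0 := hcan.minPathCost_right_eq_zero hα
      have ha := iha (α ∘ Sum.inl) (fun _ => hα _) hcan.2.1
      have hb := ihb (α ∘ Sum.inr) (fun _ => hα _) hcan.2.2
      rw [hb0, SPG.addToSource_zero] at hb
      funext e
      rcases e with e | e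
      · show a.addToSource (_ + b.minPathCost (α ∘ Sum.inr)) (a.recon0 (α ∘ Sum.inl)) e =
          (α ∘ Sum.inl) e
        rw [hb0, add_zero, ha]
      · exact congrFun hb e
  | parallel a b iha ihb =>
      have ha := iha (α ∘ Sum.inl) (fun _ => hα _) hcan.2.2.1
      have hb := ihb (α ∘ Sum.inr) (fun _ => hα _) hcan.2.2.2
      funext e
      rcases e with e | e
      · show a.addToSource (min _ _) (a.addToSource _ (a.recon0 (α ∘ Sum.inl))) e =
          (α ∘ Sum.inl) e
        rw [SPG.addToSource_addToSource, max_zero_sub_add_min, ha]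
      · show b.addToSource (min _ _) (b.addToSource _ (b.recon0 (α ∘ Sum.inr))) e =
          (α ∘ Sum.inr) e
        rw [SPG.addToSource_addToSource, neg_sub, min_comm, max_zero_sub_add_min, hb]
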